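/- arXiv:1410.6702 — 4 statements merged into one kernel-verified Lean document; each statement's English description precedes it below -/
import Mathlib

section
/- Let F(u,v) = 8u²v² − 4u² − 4v² − 2uv + 3. Then F and its partial derivative ∂F/∂v = 16u²v − 8v − 2u have no common real zero. -/
/-! On the critical set `F'_v = 0` the relation `(8u² - 4) v = u` eliminates `v` from `F`:
`(8u² - 4) F(u, v)` is, modulo `F'_v`, minus the quartic `32u⁴ - 39u² + 12`. A common zero would
therefore be a real root `t = u²` of `32t² - 39t + 12`, whose discriminant `39² - 4·32·12 = -15`
is negative. -/

lemma discrim_nodal_quadratic : discrim (32 : ℝ) (-39) 12 = -15 := by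
  norm_num [discrim]

lemma nodal_quadratic_ne_zero (t : ℝ) : 32 * (t * t) + -39 * t + 12 ≠ 0 :=
  quadratic_ne_zero_of_discrim_ne_sq
    (fun s => by rw [discrim_nodal_quadratic]; nlinarith [sq_nonneg s]) t

theorem stmt_4 :
    ¬ ∃ u v : ℝ, 8 * u ^ 2 * v ^ 2 - 4 * u ^ 2 - 4 * v ^ 2 - 2 * u * v + 3 = 0 ∧
      16 * u ^ 2 * v - 8 * v - 2 * u = 0 := by
  rintro ⟨u, v, hF, hFv⟩
  apply nodal_quadratic_ne_zero (u ^ 2)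
  linear_combination -(8 * u ^ 2 - 4) * hF + ((8 * u ^ 2 - 4) * v - u) / 2 * hFv
end

section
/- For every real x ∈ (0, π) with cos(2x) ≠ 0, the derivative of f(x) = cos(3x)/cos(2x) equals −(3 + cos(2x) + cos(4x))·sin(x)/cos²(2x), and this derivative is strictly negative. -/
open Real Set

theorem stmt_5 (x : ℝ) (hx : x ∈ Ioo (0 : ℝ) π) (hc : cos (2 * x) ≠ 0) :
    HasDerivAt (fun y : ℝ => cos (3 * y) / cos (2 * y))
      (-(3 + cos (2 * x) + cos (4 * x)) * sin x / (cos (2 * x)) ^ 2) x ∧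
    -(3 + cos (2 * x) + cos (4 * x)) * sin x / (cos (2 * x)) ^ 2 < 0 := by
  have h1 : HasDerivAt (fun y : ℝ => cos (3 * y)) (-sin (3 * x) * (3 * 1)) x :=
    ((hasDerivAt_id x).const_mul 3).cos
  have h2 : HasDerivAt (fun y : ℝ => cos (2 * y)) (-sin (2 * x) * (2 * 1)) x :=
    ((hasDerivAt_id x).const_mul 2).cos
  have hder := h1.div h2 hc
  have hnum : (-sin (3 * x) * (3 * 1) * cos (2 * x) -
      cos (3 * x) * (-sin (2 * x) * (2 * 1))) / cos (2 * x) ^ 2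
      = -(3 + cos (2 * x) + cos (4 * x)) * sin x / (cos (2 * x)) ^ 2 := by
    congr 1
    have e3 : (3 : ℝ) * x = 2 * x + x := by ring
    have e4 : (4 : ℝ) * x = 2 * x + 2 * x := by ring
    rw [e3, e4, sin_add, cos_add, cos_add, sin_two_mul, cos_two_mul]
    linear_combination (-12 * sin x * cos x ^ 2) * sin_sq_add_cos_sq x
  rw [hnum] at hder
  refine ⟨hder, ?_⟩
  have hs : 0 < sin x := sin_pos_of_pos_of_lt_pi hx.1 hx.2
  have h4 : -1 ≤ cos (4 * x) := neg_one_le_cos _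
  have h2' : -1 ≤ cos (2 * x) := neg_one_le_cos _
  have hpos : 0 < 3 + cos (2 * x) + cos (4 * x) := by linarith
  have hc2 : 0 < cos (2 * x) ^ 2 := by positivity
  apply div_neg_of_neg_of_pos _ hc2
  nlinarith
end

section
/- For every eigenvalue λ > 0 of the Neumann Laplacian on the square (0,π)² (i.e. λ = p² + q² for some nonnegative integers p, q), the number N(λ) of pairs (p,q) of nonnegative integers with p² + q² < λ satisfies N(λ) > (π/4)·λ. -/
open Real Set

noncomputable def gg (l : ℕ) : ℝ → ℝ := fun x => Real.sqrt ((l : ℝ) - x ^ 2)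

lemma gg_cont (l : ℕ) : Continuous (gg l) := by
  unfold gg; fun_prop

lemma gg_anti (l : ℕ) {x y : ℝ} (hx : 0 ≤ x) (hxy : x ≤ y) : gg l y ≤ gg l x := by
  apply Real.sqrt_le_sqrt
  nlinarith

lemma gg_lt (l : ℕ) {x y : ℝ} (hx : 0 ≤ x) (hxy : x < y) (hpos : x ^ 2 < (l : ℝ)) :
    gg l y < gg l x := by
  have h1 : (l : ℝ) - y ^ 2 < (l : ℝ) - x ^ 2 := by nlinarith
  have h2 : 0 < (l : ℝ) - x ^ 2 := by linarith
  rcases le_or_gt ((l : ℝ) - y ^ 2) 0 with h | h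
  · have hz : gg l y = 0 := Real.sqrt_eq_zero'.mpr h
    rw [hz]; exact Real.sqrt_pos.mpr h2
  · exact Real.sqrt_lt_sqrt h.le h1

lemma integral_unit : ∫ x in (0:ℝ)..1, Real.sqrt (1 - x ^ 2) = π / 4 := by
  have h := integral_sqrt_one_sub_sq
  have hint : ∀ a b : ℝ, IntervalIntegrable (fun x => Real.sqrt (1 - x ^ 2))
      MeasureTheory.volume a b := by
    intro a b
    apply Continuous.intervalIntegrable
    fun_prop
  have h2 : (∫ x in (-1:ℝ)..0, Real.sqrt (1 - x ^ 2))
      = ∫ x in (0:ℝ)..1, Real.sqrt (1 - x ^ 2) := by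
    have h3 := intervalIntegral.integral_comp_neg (a := (0:ℝ)) (b := 1)
      (fun x => Real.sqrt (1 - x ^ 2))
    simp only [neg_zero, Even.neg_pow even_two] at h3
    exact h3.symm
  have hadd : (∫ x in (-1:ℝ)..0, Real.sqrt (1 - x ^ 2))
      + (∫ x in (0:ℝ)..1, Real.sqrt (1 - x ^ 2))
      = ∫ x in (-1:ℝ)..1, Real.sqrt (1 - x ^ 2) :=
    intervalIntegral.integral_add_adjacent_intervals (hint _ _) (hint _ _)
  rw [h2, h] at hadd
  linarith

lemma integral_quarter (r : ℝ) (hr : 0 < r) :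
    ∫ x in (0:ℝ)..r, Real.sqrt (r ^ 2 - x ^ 2) = π / 4 * r ^ 2 := by
  have key : ∀ x : ℝ, Real.sqrt (r ^ 2 - x ^ 2) = r * Real.sqrt (1 - (x / r) ^ 2) := by
    intro x
    have h : r ^ 2 - x ^ 2 = r ^ 2 * (1 - (x / r) ^ 2) := by field_simp
    rw [h, Real.sqrt_mul (sq_nonneg r), Real.sqrt_sq hr.le]
  simp only [key]
  rw [intervalIntegral.integral_const_mul]
  rw [intervalIntegral.integral_comp_div (c := r) (f := fun x => Real.sqrt (1 - x ^ 2)) hr.ne']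
  simp only [zero_div, div_self hr.ne', smul_eq_mul]
  rw [integral_unit]
  ring

theorem stmt_10 (l : ℕ) (hl : 0 < l) (heig : ∃ p q : ℕ, l = p ^ 2 + q ^ 2) :
    (π / 4) * l < ({pq : ℕ × ℕ | pq.1 ^ 2 + pq.2 ^ 2 < l}.ncard : ℝ) := by
  classical
  set K := Nat.sqrt (l - 1) with hK
  have hsq : ∀ p : ℕ, p ≤ K ↔ p ^ 2 < l := by
    intro p
    rw [hK, Nat.le_sqrt, ← pow_two]
    omega
  have hKlt : K ^ 2 < l := (hsq K).mp le_rfl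
  have hlsucc : l ≤ (K + 1) ^ 2 := by
    have h := Nat.lt_succ_sqrt (l - 1)
    rw [← hK] at h
    have h2 : l - 1 < (K + 1) * (K + 1) := h
    rw [pow_two]
    omega
  set F : Finset (ℕ × ℕ) := (Finset.range (K + 1) ×ˢ Finset.range (K + 1)).filter
      (fun pq => pq.1 ^ 2 + pq.2 ^ 2 < l) with hF
  have hset : {pq : ℕ × ℕ | pq.1 ^ 2 + pq.2 ^ 2 < l} = ↑F := by
    ext pq
    simp only [hF, mem_setOf_eq, Finset.coe_filter, Finset.mem_product, Finset.mem_range]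
    constructor
    · intro h
      refine ⟨⟨?_, ?_⟩, h⟩
      · exact Nat.lt_succ_of_le ((hsq _).mpr (by omega))
      · exact Nat.lt_succ_of_le ((hsq _).mpr (by omega))
    · exact fun h => h.2
  rw [hset, Set.ncard_coe_finset]
  -- the subset H whose cardinality we can compute
  set t : ℕ → ℕ := fun p => Nat.sqrt (l - p ^ 2 - 1) + 1 with ht
  set H : Finset (ℕ × ℕ) := (Finset.range (K + 1)).biUnion
      (fun p => (Finset.range (t p)).image (fun q => (p, q))) with hH
  have hHF : H ⊆ F := by
    intro pq hpq
    simp only [hH, Finset.mem_biUnion, Finset.mem_image, Finset.mem_range] at hpq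
    obtain ⟨p, hp, q, hq, rfl⟩ := hpq
    have hpl : p ^ 2 < l := (hsq p).mp (by omega)
    have htp : t p = Nat.sqrt (l - p ^ 2 - 1) + 1 := rfl
    have hq2 : q * q ≤ l - p ^ 2 - 1 := Nat.le_sqrt.mp (by omega)
    have hq2' : q ^ 2 ≤ l - p ^ 2 - 1 := by rwa [pow_two]
    have hlt : p ^ 2 + q ^ 2 < l := by omega
    have hqK : q < K + 1 := Nat.lt_succ_of_le ((hsq q).mpr (by omega))
    simp only [hF, Finset.mem_filter, Finset.mem_product, Finset.mem_range]
    exact ⟨⟨hp, hqK⟩, hlt⟩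
  have hcard : H.card = ∑ p ∈ Finset.range (K + 1), t p := by
    rw [hH, Finset.card_biUnion]
    · apply Finset.sum_congr rfl
      intro p _
      rw [Finset.card_image_of_injective _ (fun a b hab => by simpa using hab),
        Finset.card_range]
    · intro p _ p' _ hpp'
      simp only [Finset.disjoint_left, Finset.mem_image, Finset.mem_range]
      rintro pq ⟨q, _, rfl⟩ ⟨q', _, h⟩
      exact hpp' (by simpa using (Prod.mk.injEq .. ▸ h).1.symm) 
  have htge : ∀ p : ℕ, p ≤ K → gg l p ≤ ((t p : ℕ) : ℝ) := by
    intro p hp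
    have hpl : p ^ 2 < l := (hsq p).mp hp
    set m : ℕ := l - p ^ 2 with hm
    have hm1 : 1 ≤ m := by omega
    have hnat : m ≤ t p * t p := by
      have h := Nat.lt_succ_sqrt (m - 1)
      have htp : t p = Nat.sqrt (m - 1) + 1 := by rw [ht]
      rw [htp]
      set A := Nat.sqrt (m - 1)
      have h' : m - 1 < (A + 1) * (A + 1) := h
      omega
    have hcast : (l : ℝ) - (p : ℝ) ^ 2 = (m : ℝ) := by
      rw [hm]
      push_cast [Nat.cast_sub hpl.le]
      ring
    have h1 : gg l p ≤ Real.sqrt (((t p * t p : ℕ)) : ℝ) := by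
      unfold gg
      rw [hcast]
      exact Real.sqrt_le_sqrt (by exact_mod_cast hnat)
    calc gg l p ≤ Real.sqrt (((t p * t p : ℕ)) : ℝ) := h1
      _ = ((t p : ℕ) : ℝ) := by
          push_cast
          rw [← pow_two]
          exact Real.sqrt_sq (by positivity)
  -- integral machinery
  have hint : ∀ a b : ℝ, IntervalIntegrable (gg l) MeasureTheory.volume a b :=
    fun a b => (gg_cont l).intervalIntegrable a b
  have hsplit : ∑ p ∈ Finset.range (K + 1), ∫ x in ((p : ℕ) : ℝ)..(((p + 1 : ℕ)) : ℝ), gg l x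
      = ∫ x in (((0 : ℕ)) : ℝ)..(((K + 1 : ℕ)) : ℝ), gg l x :=
    intervalIntegral.sum_integral_adjacent_intervals (fun k _ => hint _ _)
  have hle : ∀ p ∈ Finset.range (K + 1),
      (∫ x in ((p : ℕ) : ℝ)..(((p + 1 : ℕ)) : ℝ), gg l x) ≤ gg l p := by
    intro p hp
    have h1 : (∫ x in ((p : ℕ) : ℝ)..(((p + 1 : ℕ)) : ℝ), gg l x)
        ≤ ∫ _x in ((p : ℕ) : ℝ)..(((p + 1 : ℕ)) : ℝ), gg l p := by
      apply intervalIntegral.integral_mono_on (by push_cast; linarith) (hint _ _)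
        intervalIntegrable_const
      intro x hx
      exact gg_anti l (by positivity) hx.1
    rw [intervalIntegral.integral_const, smul_eq_mul] at h1
    have h2 : (((p + 1 : ℕ)) : ℝ) - ((p : ℕ) : ℝ) = 1 := by push_cast; ring
    rwa [h2, one_mul] at h1
  have hstrict : (∫ x in ((K : ℕ) : ℝ)..(((K + 1 : ℕ)) : ℝ), gg l x) < gg l K := by
    have h1 : (∫ x in ((K : ℕ) : ℝ)..(((K + 1 : ℕ)) : ℝ), gg l x)
        < ∫ _x in ((K : ℕ) : ℝ)..(((K + 1 : ℕ)) : ℝ), gg l (K : ℝ) := by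
      apply intervalIntegral.integral_lt_integral_of_continuousOn_of_le_of_exists_lt
        (by push_cast; linarith) (gg_cont l).continuousOn continuousOn_const
      · intro x hx
        exact gg_anti l (by positivity) hx.1.le
      · refine ⟨(((K + 1 : ℕ)) : ℝ), ⟨by push_cast; linarith, le_rfl⟩, ?_⟩
        apply gg_lt l (by positivity) (by push_cast; linarith)
        exact_mod_cast hKlt
    rw [intervalIntegral.integral_const, smul_eq_mul] at h1
    have h2 : (((K + 1 : ℕ)) : ℝ) - ((K : ℕ) : ℝ) = 1 := by push_cast; ring
    rwa [h2, one_mul] at h1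
  have hsum_lt : (∫ x in (((0 : ℕ)) : ℝ)..(((K + 1 : ℕ)) : ℝ), gg l x)
      < ∑ p ∈ Finset.range (K + 1), gg l p := by
    rw [← hsplit]
    exact Finset.sum_lt_sum hle ⟨K, Finset.self_mem_range_succ K, hstrict⟩
  have hsumH : ∑ p ∈ Finset.range (K + 1), gg l p ≤ (H.card : ℝ) := by
    rw [hcard, Nat.cast_sum]
    exact Finset.sum_le_sum fun p hp =>
      htge p (Nat.lt_succ_iff.mp (Finset.mem_range.mp hp))
  have hcardle : (H.card : ℝ) ≤ (F.card : ℝ) := by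
    exact_mod_cast Finset.card_le_card hHF
  -- value of the integral
  set r : ℝ := Real.sqrt l with hr
  have hl0 : (0 : ℝ) < (l : ℝ) := by exact_mod_cast hl
  have hr0 : 0 < r := Real.sqrt_pos.mpr hl0
  have hrsq : r ^ 2 = (l : ℝ) := Real.sq_sqrt hl0.le
  have hrK : r ≤ (((K + 1 : ℕ)) : ℝ) := by
    have h : (l : ℝ) ≤ (((K + 1 : ℕ)) : ℝ) ^ 2 := by exact_mod_cast hlsucc
    calc r ≤ Real.sqrt ((((K + 1 : ℕ)) : ℝ) ^ 2) := Real.sqrt_le_sqrt h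
      _ = (((K + 1 : ℕ)) : ℝ) := Real.sqrt_sq (by positivity)
  have hzero : (∫ x in r..(((K + 1 : ℕ)) : ℝ), gg l x) = 0 := by
    rw [intervalIntegral.integral_congr (g := fun _ => (0 : ℝ)) ?_]
    · simp
    · intro x hx
      rw [Set.uIcc_of_le hrK] at hx
      have hxr : r ≤ x := hx.1
      have hx2 : (l : ℝ) ≤ x ^ 2 := by nlinarith [hr0.le]
      exact Real.sqrt_eq_zero'.mpr (by linarith)
  have hintval : (∫ x in (((0 : ℕ)) : ℝ)..(((K + 1 : ℕ)) : ℝ), gg l x) = π / 4 * l := by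
    have hadd := intervalIntegral.integral_add_adjacent_intervals
      (a := (((0 : ℕ)) : ℝ)) (b := r) (c := (((K + 1 : ℕ)) : ℝ)) (hint _ _) (hint _ _)
    have hq : (∫ x in (((0 : ℕ)) : ℝ)..r, gg l x) = π / 4 * l := by
      have hgr : ∀ x : ℝ, gg l x = Real.sqrt (r ^ 2 - x ^ 2) := by
        intro x; unfold gg; rw [hrsq]
      simp only [hgr]
      rw [show (((0 : ℕ)) : ℝ) = (0 : ℝ) by norm_num, integral_quarter r hr0, hrsq]
    rw [← hadd, hq, hzero, add_zero]
  calc (π / 4) * (l : ℝ) = ∫ x in (((0 : ℕ)) : ℝ)..(((K + 1 : ℕ)) : ℝ), gg l x := hintval.symm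
    _ < ∑ p ∈ Finset.range (K + 1), gg l p := hsum_lt
    _ ≤ (H.card : ℝ) := hsumH
    _ ≤ (F.card : ℝ) := hcardle
end

section
/- The equation tan(x)² = 2√10 − 5 with x ∈ (0, π/2) has the unique solution x₁ = arctan(√(2√10 − 5)), and x₁ satisfies 4·tan(4x₁) = tan(x₁) (where all tangents involved are defined); moreover x₂ = π − x₁ also satisfies 4·tan(4x₂) = tan(x₂), and x₁, x₂ are the only solutions of 4·tan(4x) = tan(x) in (0, π). -/
/-!
Put `t = tan x`. Applying the double-angle formula twice gives
`tan 4x = 4t(1 - t²) / (t⁴ - 6t² + 1)`, so for `t ≠ 0` the equation `4 tan 4x = tan x` becomes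
`t⁴ + 10t² - 15 = 0`, i.e. `(t² + 5)² = 40`, i.e. `t² = 2√10 - 5`. On `(0, π)` away from `π/2`
the value `tan x` determines `x` up to the reflection `x ↦ π - x`, which flips the sign of `tan x`,
so the solutions are `arctan √(2√10 - 5)` and its reflection.
-/

open Real Set

namespace Real

/-- Holds without side conditions: at the poles both sides take the junk value `0`. -/
theorem tan_four_mul (x : ℝ) :
    tan (4 * x) = 4 * tan x * (1 - tan x ^ 2) / ((1 - tan x ^ 2) ^ 2 - 4 * tan x ^ 2) := by
  rw [show 4 * x = 2 * (2 * x) by ring, tan_two_mul, tan_two_mul]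
  rcases eq_or_ne (1 - tan x ^ 2) 0 with h | h
  · simp [h]
  · rw [div_pow, one_sub_div (pow_ne_zero 2 h), div_div_eq_mul_div]
    field_simp
    ring

theorem quartic_eq_zero_iff_sq_eq (t : ℝ) :
    t ^ 4 + 10 * t ^ 2 - 15 = 0 ↔ t ^ 2 = 2 * √10 - 5 := by
  have h10 : √10 ^ 2 = 10 := sq_sqrt (by norm_num)
  constructor
  · intro h
    have hsq : (t ^ 2 + 5) ^ 2 = (2 * √10) ^ 2 := by linear_combination h - 4 * h10
    have := (pow_left_inj₀ (by positivity) (by positivity) two_ne_zero).1 hsq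
    linarith
  · intro h
    rw [show t ^ 4 = (t ^ 2) ^ 2 by ring, h]
    linear_combination 4 * h10

theorem four_mul_tan_four_mul_eq_tan_iff {x : ℝ} (hx : tan x ≠ 0) :
    4 * tan (4 * x) = tan x ↔ tan x ^ 2 = 2 * √10 - 5 := by
  rw [tan_four_mul, ← quartic_eq_zero_iff_sq_eq]
  set t := tan x
  constructor
  · intro h
    have hD : (1 - t ^ 2) ^ 2 - 4 * t ^ 2 ≠ 0 := by
      intro hD
      rw [hD, div_zero, mul_zero] at h
      exact hx h.symm
    rw [mul_div_assoc', div_eq_iff hD] at h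
    have hfactor : t * (t ^ 4 + 10 * t ^ 2 - 15) = 0 := by linear_combination -h
    exact (mul_eq_zero.mp hfactor).resolve_left hx
  · intro h
    -- on the quartic the denominator `t⁴ - 6t² + 1` equals `16 (1 - t²)`
    have h1 : 1 - t ^ 2 ≠ 0 := by
      intro h1
      have : t ^ 2 = 1 := by linarith
      rw [show t ^ 4 = (t ^ 2) ^ 2 by ring, this] at h
      norm_num at h
    rw [show (1 - t ^ 2) ^ 2 - 4 * t ^ 2 = 16 * (1 - t ^ 2) by linear_combination h]
    field_simp
    ring

theorem tan_sq_eq_iff_eq_arctan {c x : ℝ} (hc : 0 ≤ c) (hx : x ∈ Ioo 0 (π / 2)) :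
    tan x ^ 2 = c ↔ x = arctan √c := by
  have htan : 0 < tan x := tan_pos_of_pos_of_lt_pi_div_two hx.1 hx.2
  rw [← sqrt_inj (sq_nonneg _) hc, sqrt_sq htan.le]
  constructor
  · intro h
    rw [← h, arctan_tan (by linarith [hx.1, pi_pos]) hx.2]
  · rintro rfl
    exact tan_arctan _

theorem tan_sq_eq_iff_eq_arctan_or_eq_pi_sub_arctan {c x : ℝ} (hc : 0 ≤ c) (hx : x ∈ Ioo 0 π)
    (hcos : cos x ≠ 0) :
    tan x ^ 2 = c ↔ x = arctan √c ∨ x = π - arctan √c := by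
  rcases lt_trichotomy x (π / 2) with hlt | rfl | hgt
  · rw [← tan_sq_eq_iff_eq_arctan hc ⟨hx.1, hlt⟩]
    have : x ≠ π - arctan √c := by linarith [arctan_lt_pi_div_two √c]
    simp [this]
  · exact absurd cos_pi_div_two hcos
  · have hmem : π - x ∈ Ioo 0 (π / 2) := ⟨by linarith [hx.2], by linarith⟩
    have : x ≠ arctan √c := by linarith [arctan_lt_pi_div_two √c]
    rw [show tan x ^ 2 = tan (π - x) ^ 2 by rw [tan_pi_sub, neg_sq],
      tan_sq_eq_iff_eq_arctan hc hmem]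
    simp only [this, false_or]
    constructor <;> intro h <;> linarith

end Real

theorem stmt_17 :
    (∀ x ∈ Ioo (0 : ℝ) (π / 2),
      (tan x ^ 2 = 2 * Real.sqrt 10 - 5 ↔ x = arctan (Real.sqrt (2 * Real.sqrt 10 - 5)))) ∧
    (4 * tan (4 * arctan (Real.sqrt (2 * Real.sqrt 10 - 5)))
        = tan (arctan (Real.sqrt (2 * Real.sqrt 10 - 5)))) ∧
    (4 * tan (4 * (π - arctan (Real.sqrt (2 * Real.sqrt 10 - 5))))
        = tan (π - arctan (Real.sqrt (2 * Real.sqrt 10 - 5)))) ∧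
    (∀ x ∈ Ioo (0 : ℝ) π, cos x ≠ 0 → cos (4 * x) ≠ 0 →
      4 * tan (4 * x) = tan x →
      x = arctan (Real.sqrt (2 * Real.sqrt 10 - 5)) ∨
      x = π - arctan (Real.sqrt (2 * Real.sqrt 10 - 5))) := by
  have hc : 0 < 2 * √10 - 5 := by
    have : (5 / 2 : ℝ) < √10 := lt_sqrt_of_sq_lt (by norm_num)
    linarith
  have htan_ne {x : ℝ} (h : tan x ^ 2 = 2 * √10 - 5) : tan x ≠ 0 := by
    rintro h0
    rw [h0] at h
    linarith
  set x₁ := arctan √(2 * √10 - 5)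
  have hx₁ : x₁ ∈ Ioo 0 (π / 2) :=
    ⟨arctan_pos.mpr (sqrt_pos.mpr hc), arctan_lt_pi_div_two _⟩
  have hx₂ : π - x₁ ∈ Ioo 0 π := ⟨by linarith [hx₁.2, pi_pos], by linarith [hx₁.1]⟩
  have hcos₂ : cos (π - x₁) ≠ 0 := by
    rw [cos_pi_sub, neg_ne_zero]
    exact (cos_pos_of_mem_Ioo ⟨by linarith [hx₁.1, pi_pos], hx₁.2⟩).ne'
  have htan₁ := (tan_sq_eq_iff_eq_arctan hc.le hx₁).2 rfl
  have htan₂ := (tan_sq_eq_iff_eq_arctan_or_eq_pi_sub_arctan hc.le hx₂ hcos₂).2 (Or.inr rfl)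
  refine ⟨fun x hx ↦ tan_sq_eq_iff_eq_arctan hc.le hx,
    (four_mul_tan_four_mul_eq_tan_iff (htan_ne htan₁)).2 htan₁,
    (four_mul_tan_four_mul_eq_tan_iff (htan_ne htan₂)).2 htan₂, ?_⟩
  intro x hx hcos _ h
  have htan : tan x ≠ 0 := by
    rw [tan_eq_sin_div_cos]
    exact div_ne_zero (sin_pos_of_pos_of_lt_pi hx.1 hx.2).ne' hcos
  exact (tan_sq_eq_iff_eq_arctan_or_eq_pi_sub_arctan hc.le hx hcos).1
    ((four_mul_tan_four_mul_eq_tan_iff htan).1 h)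
end
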